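/- arXiv:1204.1573 — 4 statements merged into one kernel-verified Lean document; each statement's English description precedes it below -/
import Mathlib

section
/- For every positive integer $n$, $\sum_{k=1}^{n} \binom{n+k}{k}^2 \binom{n}{k}^2 \left[ 1 + 2k H_{n+k}^{(1)} + 2k H_{n-k}^{(1)} - 4k H_k^{(1)} \right] = 0$. -/
open Finset

/-- Generalized harmonicSum sum `H n^{(i)} = ∑_{j=1}^n 1/j^i`. -/
def harmonicSum (i n : ℕ) : ℚ := ∑ j ∈ Finset.range n, (1 : ℚ) / ((j : ℚ) + 1) ^ i

/-!
The summand of index `k` is the residue at `x = k` of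
`R(x) = x (x + 1)² ⋯ (x + n)² / (x (x - 1) ⋯ (x - n))²`, and the residue at `0` is `1`.
The numerator has degree `2n + 1` and the denominator is monic of degree `2n + 2`, so all residues
add up to `1` and those at `1, …, n` add up to `0`.

Residues are handled algebraically: in the partial fraction decomposition
`f = ∑ₖ rₖ ∏_{j ≠ k} (X - aⱼ)²` with `deg rₖ < 2`, the residue at `aₖ` is the linear coefficient
of `rₖ`. These coefficients add up to the top coefficient of `f`, and each one is determined by
`f (aₖ)` and `f' (aₖ)`.
-/

open Polynomial
open scoped Nat

namespace Polynomial

theorem exists_eq_sum_rem_mul_prod_erase {R ι : Type*} [CommRing R] [Nontrivial R]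
    [DecidableEq ι] {s : Finset ι} {f : R[X]} {g : ι → R[X]} (hg : ∀ i ∈ s, (g i).Monic)
    (hgg : Set.Pairwise s fun i j => IsCoprime (g i) (g j))
    (hf : f.degree < (∏ i ∈ s, g i).degree) :
    ∃ r : ι → R[X], (∀ i ∈ s, (r i).degree < (g i).degree) ∧
      f = ∑ i ∈ s, r i * ∏ j ∈ s.erase i, g j := by
  obtain ⟨q, r, hr, rfl⟩ := eq_quo_mul_prod_add_sum_rem_mul_prod f hg hgg
  have hP : (∏ i ∈ s, g i).Monic := monic_prod_of_monic s g hg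
  have hrem : (∑ i ∈ s, r i * ∏ j ∈ s.erase i, g j).degree < (∏ i ∈ s, g i).degree := by
    refine (degree_sum_le _ _).trans_lt ((Finset.sup_lt_iff ?_).2 fun i hi => ?_)
    · exact bot_lt_iff_ne_bot.2 (degree_ne_bot.2 hP.ne_zero)
    have hw : (∏ j ∈ s.erase i, g j).Monic :=
      monic_prod_of_monic _ g fun j hj => hg j (mem_of_mem_erase hj)
    rw [← mul_prod_erase s g hi, hw.degree_mul, hw.degree_mul]
    exact WithBot.add_lt_add_right (degree_ne_bot.2 hw.ne_zero) (hr i hi)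
  have hq : q = 0 := by
    rw [add_comm, mul_comm q] at hf
    rw [← (div_modByMonic_unique q _ hP ⟨rfl, hrem⟩).1, divByMonic_eq_zero_iff hP]
    exact hf
  exact ⟨r, hr, by rw [hq, zero_mul, zero_add]⟩

theorem eval_eq_and_eval_derivative_eq_of_sq_dvd_sub {R : Type*} [CommRing R] {p q : R[X]}
    {x : R} (h : (X - C x) ^ 2 ∣ p - q) :
    p.eval x = q.eval x ∧ (derivative p).eval x = (derivative q).eval x := by
  obtain ⟨d, hd⟩ := h
  rw [sub_eq_iff_eq_add] at hd
  subst hd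
  simp [derivative_sq]

theorem eval_derivative_prod_X_sub_C {K ι : Type*} [Field K] [DecidableEq ι] (t : Finset ι)
    (b : ι → K) {x : K} (hx : ∀ j ∈ t, x ≠ b j) :
    (derivative (∏ j ∈ t, (X - C (b j)))).eval x =
      (∏ j ∈ t, (X - C (b j))).eval x * ∑ j ∈ t, (x - b j)⁻¹ := by
  rw [derivative_prod_finset, eval_finsetSum, mul_sum]
  refine sum_congr rfl fun j hj => ?_
  rw [derivative_X_sub_C, mul_one, ← mul_prod_erase t _ hj, eval_mul, eval_sub, eval_X, eval_C]
  field_simp [sub_ne_zero.2 (hx j hj)]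

section DoublePoles

variable {K ι : Type*} [Field K] [DecidableEq ι] {s : Finset ι} {a : ι → K}

/-- The residue at `a i` of `f / ∏ j ∈ s, (X - a j) ^ 2`. -/
noncomputable def doublePoleResidue (s : Finset ι) (a : ι → K) (f : K[X]) (i : ι) : K :=
  ((derivative f).eval (a i) - 2 * f.eval (a i) * ∑ j ∈ s.erase i, (a i - a j)⁻¹) /
    (∏ j ∈ s.erase i, (a i - a j)) ^ 2

theorem coeff_one_eq_doublePoleResidue (ha : Set.InjOn a s) {f : K[X]} {r : ι → K[X]}
    (hr : ∀ i ∈ s, (r i).degree ≤ 1)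
    (hf : f = ∑ i ∈ s, r i * (∏ j ∈ s.erase i, (X - C (a j))) ^ 2) {k : ι} (hk : k ∈ s) :
    (r k).coeff 1 = doublePoleResidue s a f k := by
  set w := ∏ j ∈ s.erase k, (X - C (a j))
  have hne : ∀ j ∈ s.erase k, a k ≠ a j := fun j hj =>
    ha.ne hk (mem_of_mem_erase hj) (ne_of_mem_erase hj).symm
  have hdvd : (X - C (a k)) ^ 2 ∣ f - r k * w ^ 2 := by
    rw [hf, ← add_sum_erase s _ hk, add_sub_cancel_left]
    refine dvd_sum fun i hi => dvd_mul_of_dvd_right (pow_dvd_pow_of_dvd ?_ 2) _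
    exact dvd_prod_of_mem _ (mem_erase.2 ⟨(ne_of_mem_erase hi).symm, hk⟩)
  obtain ⟨hf₀, hf₁⟩ := eval_eq_and_eval_derivative_eq_of_sq_dvd_sub hdvd
  have hw₀ : w.eval (a k) = ∏ j ∈ s.erase k, (a k - a j) := by simp [w, eval_prod]
  have hw₁ : (derivative w).eval (a k) = w.eval (a k) * ∑ j ∈ s.erase k, (a k - a j)⁻¹ :=
    eval_derivative_prod_X_sub_C (s.erase k) a hne
  have hw : w.eval (a k) ≠ 0 := hw₀ ▸ prod_ne_zero_iff.2 fun j hj => sub_ne_zero.2 (hne j hj)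
  rw [doublePoleResidue, hf₀, hf₁, ← hw₀]
  conv_rhs => rw [eq_X_add_C_of_degree_le_one (hr k hk)]
  simp only [derivative_mul, derivative_add, derivative_C, derivative_X, derivative_sq, eval_add,
    eval_mul, eval_C, eval_X, eval_pow, eval_zero, eval_one, hw₁]
  field_simp
  ring

theorem sum_doublePoleResidue (ha : Set.InjOn a s) {f : K[X]}
    (hf : f.degree < ((2 * #s : ℕ) : WithBot ℕ)) :
    ∑ i ∈ s, doublePoleResidue s a f i = f.coeff (2 * #s - 1) := by
  have hmonic (t : Finset ι) : (∏ j ∈ t, (X - C (a j))).Monic :=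
    monic_prod_of_monic _ _ fun j _ => monic_X_sub_C (a j)
  have hdeg : (∏ i ∈ s, (X - C (a i)) ^ 2).degree = ((2 * #s : ℕ) : WithBot ℕ) := by
    rw [prod_pow, degree_pow, degree_eq_natDegree (hmonic s).ne_zero,
      natDegree_finsetProd_X_sub_C_eq_card]
    norm_cast
  obtain ⟨r, hr, hfr⟩ := exists_eq_sum_rem_mul_prod_erase (fun i _ => (monic_X_sub_C (a i)).pow 2)
    (fun i hi j hj hij =>
      (isCoprime_X_sub_C_of_isUnit_sub (sub_ne_zero.2 (ha.ne hi hj hij)).isUnit).pow)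
    (hdeg ▸ hf)
  simp only [prod_pow] at hfr
  have hr₁ : ∀ i ∈ s, (r i).degree ≤ 1 := fun i hi =>
    Order.le_of_lt_succ (by simpa [degree_pow] using hr i hi : (r i).degree < 2)
  calc ∑ i ∈ s, doublePoleResidue s a f i = ∑ i ∈ s, (r i).coeff 1 :=
        sum_congr rfl fun i hi => (coeff_one_eq_doublePoleResidue ha hr₁ hfr hi).symm
    _ = f.coeff (2 * #s - 1) := by
      rw [hfr, finsetSum_coeff]
      refine sum_congr rfl fun i hi => ?_
      have hw : ((∏ j ∈ s.erase i, (X - C (a j))) ^ 2).natDegree = 2 * (#s - 1) := by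
        rw [natDegree_pow, natDegree_finsetProd_X_sub_C_eq_card, card_erase_of_mem hi]
      have hr : (r i).natDegree ≤ 1 := natDegree_le_iff_degree_le.2 (hr₁ i hi)
      have hs : 2 * #s - 1 = 1 + 2 * (#s - 1) := by
        have := card_pos.2 ⟨i, hi⟩
        omega
      rw [hs, coeff_mul_add_eq_of_natDegree_le hr hw.le, ← hw, ((hmonic _).pow 2).coeff_natDegree,
        mul_one]

end DoublePoles

end Polynomial

@[to_additive]
theorem Finset.prod_erase_range_succ {M : Type*} [CommMonoid M] (f : ℕ → M) {n k : ℕ}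
    (hk : k ≤ n) :
    ∏ j ∈ (range (n + 1)).erase k, f j =
      (∏ j ∈ range k, f j) * ∏ j ∈ range (n - k), f (k + 1 + j) := by
  have hsplit : (range (n + 1)).erase k = range k ∪ Ico (k + 1) (n + 1) := by
    ext j
    simp only [mem_erase, mem_range, mem_union, mem_Ico]
    omega
  rw [hsplit, prod_union (disjoint_left.2 fun j hj hj' => by simp at hj hj'; omega),
    prod_Ico_eq_prod_range, Nat.add_sub_add_right]

theorem Nat.cast_sub_cast_sub_one_sub {R : Type*} [CommRing R] {k j : ℕ} (hj : j < k) :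
    (k : R) - ((k - 1 - j : ℕ) : R) = j + 1 := by
  rw [Nat.sub_sub, Nat.cast_sub (by omega)]
  push_cast
  ring

theorem Nat.choose_mul_choose_mul_factorial_mul_factorial {n k : ℕ} (hk : k ≤ n) :
    (n + k).choose k * n.choose k * (k ! * (n - k)!) = (k + 1).ascFactorial n := by
  apply Nat.eq_of_mul_eq_mul_left k.factorial_pos
  calc k ! * ((n + k).choose k * n.choose k * (k ! * (n - k)!))
      = (n + k).choose k * k ! * (n.choose k * k ! * (n - k)!) := by ring
    _ = k ! * (k + 1).ascFactorial n := by
      rw [Nat.choose_mul_factorial_mul_factorial hk, mul_right_comm,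
        Nat.add_choose_mul_factorial_mul_factorial, Nat.factorial_mul_ascFactorial, add_comm]

theorem prod_erase_range_sub_sq {R : Type*} [CommRing R] {n k : ℕ} (hk : k ≤ n) :
    (∏ j ∈ (range (n + 1)).erase k, ((k : R) - j)) ^ 2 = ((k ! : R) * (n - k)!) ^ 2 := by
  rw [prod_erase_range_succ _ hk, mul_pow, mul_pow, ← prod_range_add_one_eq_factorial,
    ← prod_range_add_one_eq_factorial, Nat.cast_prod, Nat.cast_prod]
  congr 1
  · rw [← prod_range_reflect (fun j => ((k : R) - j)) k]
    exact congrArg (· ^ 2) <| prod_congr rfl fun j hj => by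
      rw [Nat.cast_sub_cast_sub_one_sub (mem_range.1 hj), Nat.cast_succ]
  · rw [← prod_pow, ← prod_pow]
    refine prod_congr rfl fun j _ => ?_
    push_cast
    ring

theorem harmonicSum_one (m : ℕ) : harmonicSum 1 m = ∑ j ∈ range m, ((j : ℚ) + 1)⁻¹ := by
  simp [harmonicSum]

theorem sum_erase_range_inv_sub {n k : ℕ} (hk : k ≤ n) :
    ∑ j ∈ (range (n + 1)).erase k, ((k : ℚ) - j)⁻¹ = harmonicSum 1 k - harmonicSum 1 (n - k) := by
  rw [sum_erase_range_succ _ hk, harmonicSum_one, harmonicSum_one, ← sum_range_reflect _ k,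
    sub_eq_add_neg, ← sum_neg_distrib]
  congr 1
  · exact sum_congr rfl fun j hj => by rw [Nat.cast_sub_cast_sub_one_sub (mem_range.1 hj)]
  · refine sum_congr rfl fun j _ => ?_
    rw [← inv_neg]
    push_cast
    ring

/-- `(X + 1) (X + 2) ⋯ (X + n)`, with factors `X - C b` to fit `eval_derivative_prod_X_sub_C`. -/
noncomputable def shiftedAscPochhammer (n : ℕ) : ℚ[X] := ∏ j ∈ range n, (X - C (-((j : ℚ) + 1)))

theorem shiftedAscPochhammer_monic (n : ℕ) : (shiftedAscPochhammer n).Monic :=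
  monic_prod_of_monic _ _ fun _ _ => monic_X_sub_C _

theorem natDegree_shiftedAscPochhammer (n : ℕ) : (shiftedAscPochhammer n).natDegree = n := by
  rw [shiftedAscPochhammer, natDegree_finsetProd_X_sub_C_eq_card, card_range]

theorem eval_shiftedAscPochhammer (n k : ℕ) :
    (shiftedAscPochhammer n).eval (k : ℚ) = (k + 1).ascFactorial n := by
  rw [shiftedAscPochhammer, eval_prod, Nat.ascFactorial_eq_prod_range, Nat.cast_prod]
  refine prod_congr rfl fun j _ => ?_
  simp only [eval_sub, eval_X, eval_C]
  push_cast
  ring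

theorem eval_derivative_shiftedAscPochhammer (n k : ℕ) :
    (derivative (shiftedAscPochhammer n)).eval (k : ℚ) =
      (shiftedAscPochhammer n).eval (k : ℚ) * (harmonicSum 1 (n + k) - harmonicSum 1 k) := by
  have hk : ∀ j ∈ range n, (k : ℚ) ≠ -((j : ℚ) + 1) := fun j _ => by
    linarith [j.cast_nonneg (α := ℚ), k.cast_nonneg (α := ℚ)]
  rw [shiftedAscPochhammer, eval_derivative_prod_X_sub_C _ _ hk, harmonicSum_one,
    harmonicSum_one, add_comm n k, sum_range_add, add_sub_cancel_left]
  congr 1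
  refine sum_congr rfl fun j _ => ?_
  push_cast
  ring_nf

theorem doublePoleResidue_X_mul_shiftedAscPochhammer_sq {n k : ℕ} (hk : k ≤ n) :
    doublePoleResidue (range (n + 1)) (fun j : ℕ => (j : ℚ)) (X * shiftedAscPochhammer n ^ 2) k =
      (((n + k).choose k : ℚ)) ^ 2 * ((n.choose k : ℚ)) ^ 2 *
        (1 + 2 * k * harmonicSum 1 (n + k) + 2 * k * harmonicSum 1 (n - k)
          - 4 * k * harmonicSum 1 k) := by
  have hN : (shiftedAscPochhammer n).eval (k : ℚ) =
      (n + k).choose k * n.choose k * ((k ! : ℚ) * (n - k)!) := by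
    rw [eval_shiftedAscPochhammer, ← Nat.choose_mul_choose_mul_factorial_mul_factorial hk]
    push_cast
    ring
  rw [doublePoleResidue, prod_erase_range_sub_sq hk, sum_erase_range_inv_sub hk]
  simp only [derivative_mul, derivative_X, derivative_sq, eval_add, eval_mul, eval_one, eval_X,
    eval_pow, eval_C, eval_derivative_shiftedAscPochhammer, hN]
  field_simp
  ring

theorem stmt_0_general (n : ℕ) :
    ∑ k ∈ Finset.Icc 1 n,
      (((n + k).choose k : ℚ)) ^ 2 * ((n.choose k : ℚ)) ^ 2 *
        (1 + 2 * k * harmonicSum 1 (n + k) + 2 * k * harmonicSum 1 (n - k)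
          - 4 * k * harmonicSum 1 k) = 0 := by
  have hmonic : (X * shiftedAscPochhammer n ^ 2).Monic :=
    monic_X.mul ((shiftedAscPochhammer_monic n).pow 2)
  have hdeg : (X * shiftedAscPochhammer n ^ 2).natDegree = 2 * #(range (n + 1)) - 1 := by
    rw [monic_X.natDegree_mul ((shiftedAscPochhammer_monic n).pow 2), natDegree_pow,
      natDegree_shiftedAscPochhammer, natDegree_X, card_range]
    omega
  have hlt :
      (X * shiftedAscPochhammer n ^ 2).degree < ((2 * #(range (n + 1)) : ℕ) : WithBot ℕ) := by
    rw [degree_eq_natDegree hmonic.ne_zero, hdeg, Nat.cast_lt, card_range]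
    omega
  have hsum := sum_doublePoleResidue (Nat.cast_injective (R := ℚ)).injOn hlt
  rw [← hdeg, hmonic.coeff_natDegree, sum_congr rfl fun k hk =>
    doublePoleResidue_X_mul_shiftedAscPochhammer_sq (Nat.lt_succ_iff.1 (mem_range.1 hk)),
    sum_range_eq_add_Ico _ n.add_one_pos, Ico_add_one_right_eq_Icc] at hsum
  simpa using hsum

theorem stmt_0 (n : ℕ) (hn : 0 < n) :
    ∑ k ∈ Finset.Icc 1 n,
      (((n + k).choose k : ℚ)) ^ 2 * ((n.choose k : ℚ)) ^ 2 *
        (1 + 2 * k * harmonicSum 1 (n + k) + 2 * k * harmonicSum 1 (n - k)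
          - 4 * k * harmonicSum 1 k) = 0 :=
  stmt_0_general n
end

section
/- Let $m, n$ be positive integers with $m \geq n$, and let $x$ be a rational (or real) number that is not an integer in $[-m, 0]$. Then $\sum_{k=0}^{n} \binom{m+k}{k}\binom{m}{k}\binom{n+k}{k}\binom{n}{k} \Big\{ \frac{-k}{(x+k)^2} + \frac{1 + k(H_{m+k}^{(1)} + H_{m-k}^{(1)} + H_{n+k}^{(1)} + H_{n-k}^{(1)} - 4H_k^{(1)})}{x+k} \Big\} + \sum_{k=n+1}^{m} \frac{(-1)^{k-n}}{x+k} \binom{m+k}{k}\binom{m}{k}\binom{n+k}{k}/\binom{k-1}{n} = \frac{x\,(1-x)_n\,(1-x)_m}{(x)_{n+1}\,(x)_{m+1}}$, where $(a)_r := a(a+1)\cdots(a+r-1)$ is the rising factorial with $(a)_0 := 1$. -/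
open Finset

/-- Rising factorial `(a)_r = a(a+1)⋯(a+r-1)`. -/
def riseFact (a : ℚ) (r : ℕ) : ℚ := ∏ j ∈ Finset.range r, (a + j)

/-!
Multiplying by `(x)_{n+1} (x)_{m+1}` turns the identity into an equality of polynomials of degree
at most `n + m + 1`. Their difference is divisible by `(X + k) ^ e_k` for every `k ≤ m`, where
`e_k = 2` for `k ≤ n` and `e_k = 1` otherwise: every summand except the `k`-th is, and for the
`k`-th one it comes down to comparing values (and, when `e_k = 2`, first derivatives) at `-k`. The
derivatives are logarithmic derivatives of Pochhammer products, which is where the harmonic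
numbers come from. As `∑ e_k = n + m + 2`, the difference vanishes.
-/

open Polynomial
open scoped Nat

local notation "H" => harmonicSum 1

@[to_additive]
theorem prod_range_succ_erase {M : Type*} [CommMonoid M] (f : ℕ → M) {k t : ℕ} (h : k ≤ t) :
    ∏ j ∈ (range (t + 1)).erase k, f j =
      (∏ j ∈ range k, f j) * ∏ j ∈ range (t - k), f (k + 1 + j) := by
  have hsplit : (range (t + 1)).erase k = range k ∪ Ico (k + 1) (t + 1) := by
    ext j; simp only [mem_erase, mem_range, mem_union, mem_Ico]; omega
  rw [hsplit, prod_union (disjoint_left.2 fun j hj hj' => by simp at hj hj'; omega),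
    prod_Ico_eq_prod_range, Nat.add_sub_add_right]

lemma cast_factorial_eq_prod (t : ℕ) : (t ! : ℚ) = ∏ j ∈ range t, ((j : ℚ) + 1) := by
  rw [← prod_range_add_one_eq_factorial]; push_cast; rfl

lemma prod_range_cast_add_succ (k t : ℕ) :
    ∏ j ∈ range t, ((k + j : ℚ) + 1) = (t + k)! / k ! := by
  rw [eq_div_iff (by positivity), add_comm t, cast_factorial_eq_prod, cast_factorial_eq_prod,
    prod_range_add, mul_comm]
  push_cast; rfl

lemma sum_range_inv_cast_add_succ (k t : ℕ) :
    ∑ j ∈ range t, 1 / ((k + j : ℚ) + 1) = H (t + k) - H k := by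
  rw [eq_sub_iff_add_eq', harmonicSum, harmonicSum, add_comm t, sum_range_add]
  push_cast; simp only [pow_one]

lemma prod_range_cast_sub {k t : ℕ} (h : t ≤ k) :
    ∏ j ∈ range t, ((j : ℚ) - k) = (-1) ^ t * k.descFactorial t := by
  have hfactor : ∀ j ∈ range t, (j : ℚ) - k = -1 * ((k - j : ℕ) : ℚ) := fun j hj => by
    rw [Nat.cast_sub (by simp at hj; omega)]; ring
  rw [prod_congr rfl hfactor, ← pow_card_mul_prod, card_range, Nat.descFactorial_eq_prod_range,
    Nat.cast_prod]

lemma sum_range_inv_cast_sub (k : ℕ) : ∑ j ∈ range k, 1 / ((j : ℚ) - k) = -H k := by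
  rw [← sum_range_reflect, harmonicSum, ← sum_neg_distrib]
  refine sum_congr rfl fun j hj => ?_
  rw [Nat.sub_sub, Nat.cast_sub (by simp at hj; omega), pow_one, ← one_div_neg_eq_neg_one_div]
  push_cast; ring_nf

lemma prod_range_succ_erase_cast_sub {k t : ℕ} (h : k ≤ t) :
    ∏ j ∈ (range (t + 1)).erase k, ((j : ℚ) - k) = (-1) ^ k * k ! * (t - k)! := by
  rw [prod_range_succ_erase _ h, prod_range_cast_sub le_rfl, Nat.descFactorial_self,
    cast_factorial_eq_prod (t - k)]
  push_cast; ring_nf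

lemma sum_range_succ_erase_inv_cast_sub {k t : ℕ} (h : k ≤ t) :
    ∑ j ∈ (range (t + 1)).erase k, 1 / ((j : ℚ) - k) = H (t - k) - H k := by
  rw [sum_range_succ_erase _ h, sum_range_inv_cast_sub, neg_add_eq_sub, harmonicSum]
  congr 1
  refine sum_congr rfl fun j _ => ?_
  push_cast; ring_nf

lemma cast_choose_add_mul_choose {k t : ℕ} (h : k ≤ t) :
    ((t + k).choose k : ℚ) * t.choose k * (k ! * (t - k)!) = (t + k)! / k ! := by
  rw [Nat.cast_choose ℚ (Nat.le_add_left k t), Nat.cast_choose ℚ h, Nat.add_sub_cancel]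
  field_simp

namespace Polynomial

theorem eval_derivative_prod_eq_mul_sum_div {K ι : Type*} [Field K] [DecidableEq ι]
    (s : Finset ι) (f : ι → K[X]) {a : K} (hf : ∀ i ∈ s, (f i).eval a ≠ 0) :
    (derivative (∏ i ∈ s, f i)).eval a =
      (∏ i ∈ s, (f i).eval a) * ∑ i ∈ s, (derivative (f i)).eval a / (f i).eval a := by
  rw [derivative_prod_finset, eval_finsetSum, mul_sum]
  refine sum_congr rfl fun i hi => ?_
  rw [eval_mul, eval_prod, ← mul_prod_erase s (fun j => (f j).eval a) hi]
  field_simp [hf i hi]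

theorem sq_X_sub_C_dvd_of_eval_eq_zero {R : Type*} [CommRing R] {p : R[X]} {a : R}
    (h0 : p.eval a = 0) (h1 : (derivative p).eval a = 0) : (X - C a) ^ 2 ∣ p := by
  rcases eq_or_ne p 0 with rfl | hp
  · exact dvd_zero _
  rw [← le_rootMultiplicity_iff hp]
  exact (one_lt_rootMultiplicity_iff_isRoot hp).2 ⟨h0, h1⟩

theorem eq_zero_of_pow_X_sub_C_dvd {K ι : Type*} [Field K] {s : Finset ι} {a : ι → K}
    (ha : Function.Injective a) (e : ι → ℕ) {p : K[X]}
    (hdvd : ∀ i ∈ s, (X - C (a i)) ^ e i ∣ p) (hdeg : p.natDegree < ∑ i ∈ s, e i) :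
    p = 0 := by
  by_contra hp
  have hprod : ∏ i ∈ s, (X - C (a i)) ^ e i ∣ p :=
    prod_dvd_of_coprime (fun i _ j _ hij => ((pairwise_coprime_X_sub_C ha) hij).pow) hdvd
  have hle := natDegree_le_of_dvd hprod hp
  rw [natDegree_prod _ _ fun i _ => pow_ne_zero _ (X_sub_C_ne_zero _)] at hle
  simp only [natDegree_pow, natDegree_X_sub_C, mul_one] at hle
  omega

theorem natDegree_prod_le_card {R ι : Type*} [CommSemiring R] {s : Finset ι} {f : ι → R[X]}
    (h : ∀ i ∈ s, (f i).natDegree ≤ 1) : (∏ i ∈ s, f i).natDegree ≤ s.card := by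
  simpa using (natDegree_prod_le s f).trans (sum_le_card_nsmul s _ 1 h)

theorem X_add_C_eq_X_sub_C_neg {R : Type*} [Ring R] (a : R) : X + C a = X - C (-a) := by
  rw [map_neg, sub_neg_eq_add]

end Polynomial

-- `pochErase t k` is `(X)_{t+1} / (X + k)` when `k ≤ t`, and `(X)_{t+1}` when `t < k`;
-- `pochOneSub t` is `(1 - X)_t`.
noncomputable def pochErase (t k : ℕ) : ℚ[X] :=
  ∏ j ∈ (range (t + 1)).erase k, (X + C (j : ℚ))

noncomputable def pochOneSub (t : ℕ) : ℚ[X] := ∏ j ∈ range t, (C ((j : ℚ) + 1) - X)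

lemma riseFact_ne_zero {x : ℚ} {t : ℕ} (h : ∀ j < t, x + j ≠ 0) : riseFact x t ≠ 0 :=
  prod_ne_zero_iff.2 fun j hj => h j (mem_range.1 hj)

lemma riseFact_succ_eq_mul_eval_pochErase {t k : ℕ} (h : k ≤ t) (x : ℚ) :
    riseFact x (t + 1) = (x + k) * (pochErase t k).eval x := by
  rw [riseFact, pochErase, eval_prod,
    ← mul_prod_erase _ _ (show k ∈ range (t + 1) by simp; omega)]
  simp

lemma riseFact_succ_eq_eval_pochErase_of_lt {t k : ℕ} (h : t < k) (x : ℚ) :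
    riseFact x (t + 1) = (pochErase t k).eval x := by
  rw [riseFact, pochErase, erase_eq_of_notMem (by simp; omega), eval_prod]
  simp

lemma eval_pochOneSub (t : ℕ) (x : ℚ) : (pochOneSub t).eval x = riseFact (1 - x) t := by
  rw [pochOneSub, eval_prod, riseFact]
  exact prod_congr rfl fun j _ => by simp; ring

lemma eval_neg_pochErase {t k : ℕ} (h : k ≤ t) :
    (pochErase t k).eval (-(k : ℚ)) = (-1) ^ k * k ! * (t - k)! := by
  rw [pochErase, eval_prod, ← prod_range_succ_erase_cast_sub h]
  exact prod_congr rfl fun j _ => by simp; ring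

lemma eval_neg_pochErase_of_lt {t k : ℕ} (h : t < k) :
    (pochErase t k).eval (-(k : ℚ)) = (-1) ^ (t + 1) * k.descFactorial (t + 1) := by
  rw [pochErase, erase_eq_of_notMem (by simp; omega), eval_prod, ← prod_range_cast_sub h]
  exact prod_congr rfl fun j _ => by simp; ring

lemma eval_neg_derivative_pochErase {t k : ℕ} (h : k ≤ t) :
    (derivative (pochErase t k)).eval (-(k : ℚ)) =
      (pochErase t k).eval (-(k : ℚ)) * (H (t - k) - H k) := by
  have hne : ∀ j ∈ (range (t + 1)).erase k, (X + C (j : ℚ)).eval (-(k : ℚ)) ≠ 0 :=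
    fun j hj => by simpa [sub_eq_zero, eq_comm, neg_add_eq_sub] using (mem_erase.1 hj).1
  rw [pochErase, eval_derivative_prod_eq_mul_sum_div _ _ hne, eval_prod,
    ← sum_range_succ_erase_inv_cast_sub h]
  congr 1
  exact sum_congr rfl fun j _ => by simp; ring

lemma eval_neg_pochOneSub (t k : ℕ) : (pochOneSub t).eval (-(k : ℚ)) = (t + k)! / k ! := by
  rw [pochOneSub, eval_prod, ← prod_range_cast_add_succ]
  exact prod_congr rfl fun j _ => by simp; ring

lemma eval_neg_derivative_pochOneSub (t k : ℕ) :
    (derivative (pochOneSub t)).eval (-(k : ℚ)) =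
      -(pochOneSub t).eval (-(k : ℚ)) * (H (t + k) - H k) := by
  have hne : ∀ j ∈ range t, (C ((j : ℚ) + 1) - X).eval (-(k : ℚ)) ≠ 0 := fun j _ => by
    simp only [eval_sub, eval_C, eval_X, sub_neg_eq_add]; positivity
  rw [pochOneSub, eval_derivative_prod_eq_mul_sum_div _ _ hne, eval_prod,
    ← sum_range_inv_cast_add_succ, neg_mul, ← mul_neg, ← sum_neg_distrib]
  congr 1
  exact sum_congr rfl fun j _ => by simp; ring

lemma X_add_C_dvd_pochErase {t j k : ℕ} (hk : k ≤ t) (hjk : j ≠ k) :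
    X + C (k : ℚ) ∣ pochErase t j :=
  dvd_prod_of_mem (fun i : ℕ => X + C (i : ℚ))
    (mem_erase.2 ⟨hjk.symm, mem_range.2 (by omega)⟩)

lemma natDegree_pochErase_le (t k : ℕ) : (pochErase t k).natDegree ≤ t + 1 :=
  (natDegree_prod_le_card fun _ _ => (natDegree_X_add_C _).le).trans
    ((card_erase_le).trans (card_range _).le)

lemma natDegree_pochErase_le_of_le {t k : ℕ} (h : k ≤ t) : (pochErase t k).natDegree ≤ t :=
  (natDegree_prod_le_card fun _ _ => (natDegree_X_add_C _).le).trans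
    (by rw [card_erase_of_mem (mem_range.2 (by omega)), card_range]; rfl)

lemma natDegree_pochOneSub_le (t : ℕ) : (pochOneSub t).natDegree ≤ t :=
  (natDegree_prod_le_card fun _ _ => by
    rw [← neg_sub, natDegree_neg, natDegree_X_sub_C]).trans (card_range _).le

section PartialFractions

variable (m n : ℕ)

def doubleCoeff (k : ℕ) : ℚ :=
  ((m + k).choose k : ℚ) * (m.choose k : ℚ) * ((n + k).choose k : ℚ) * (n.choose k : ℚ)

def harmonicCoeff (k : ℕ) : ℚ :=
  1 + (k : ℚ) * (H (m + k) + H (m - k) + H (n + k) + H (n - k) - 4 * H k)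

def simpleCoeff (k : ℕ) : ℚ :=
  (-1 : ℚ) ^ (k - n) * ((m + k).choose k : ℚ) * (m.choose k : ℚ) * ((n + k).choose k : ℚ)
    / ((k - 1).choose n : ℚ)

noncomputable def partialNumer (k : ℕ) : ℚ[X] :=
  if k ≤ n then
    C (doubleCoeff m n k) * (C (-(k : ℚ)) + C (harmonicCoeff m n k) * (X + C (k : ℚ)))
  else C (simpleCoeff m n k)

-- The left-hand side of the theorem times `(X)_{n+1} (X)_{m+1}`.
noncomputable def clearedSum : ℚ[X] :=
  ∑ k ∈ range (m + 1), partialNumer m n k * (pochErase n k * pochErase m k)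

def poleOrder (k : ℕ) : ℕ := if k ≤ n then 2 else 1

variable {m n}

lemma doubleCoeff_mul_eval_neg_pochErase {k : ℕ} (hk : k ≤ n) (hnm : n ≤ m) :
    doubleCoeff m n k * (pochErase n k).eval (-(k : ℚ)) * (pochErase m k).eval (-(k : ℚ)) =
      (pochOneSub n).eval (-(k : ℚ)) * (pochOneSub m).eval (-(k : ℚ)) := by
  have hsign : ((-1 : ℚ) ^ k) ^ 2 = 1 := by rw [← pow_mul, pow_mul']; simp
  rw [eval_neg_pochErase hk, eval_neg_pochErase (hk.trans hnm), eval_neg_pochOneSub,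
    eval_neg_pochOneSub, ← cast_choose_add_mul_choose hk,
    ← cast_choose_add_mul_choose (hk.trans hnm), doubleCoeff]
  linear_combination ((m + k).choose k : ℚ) * m.choose k * (k ! * (m - k)!) *
    (((n + k).choose k : ℚ) * n.choose k * (k ! * (n - k)!)) * hsign

lemma simpleCoeff_mul_eval_neg_pochErase {k : ℕ} (hnk : n < k) (hkm : k ≤ m) :
    simpleCoeff m n k * (pochErase n k).eval (-(k : ℚ)) * (pochErase m k).eval (-(k : ℚ)) =
      -k * (pochOneSub n).eval (-(k : ℚ)) * (pochOneSub m).eval (-(k : ℚ)) := by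
  obtain ⟨l, rfl⟩ : ∃ l, k = l + 1 := ⟨k - 1, by omega⟩
  have hsign : (-1 : ℚ) ^ (l + 1 - n) * (-1) ^ (n + 1) * (-1) ^ (l + 1) = -1 := by
    rw [← pow_add, ← pow_add, show l + 1 - n + (n + 1) + (l + 1) = 2 * (l + 1) + 1 by omega,
      pow_succ, pow_mul]
    simp
  have hchoose : (l.choose n : ℚ) ≠ 0 := by exact_mod_cast (Nat.choose_pos (by omega)).ne'
  rw [eval_neg_pochErase_of_lt hnk, eval_neg_pochErase hkm, eval_neg_pochOneSub,
    eval_neg_pochOneSub, ← cast_choose_add_mul_choose hkm, Nat.succ_descFactorial_succ,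
    Nat.descFactorial_eq_factorial_mul_choose, simpleCoeff, Nat.add_sub_cancel,
    Nat.cast_choose ℚ (Nat.le_add_left (l + 1) n), Nat.add_sub_cancel]
  push_cast
  field_simp
  linear_combination ((m + (l + 1)).choose (l + 1) : ℚ) * m.choose (l + 1) * hsign

lemma sq_dvd_partialNumer_sub_of_le {k : ℕ} (hk : k ≤ n) (hnm : n ≤ m) :
    (X + C (k : ℚ)) ^ 2 ∣
      partialNumer m n k * (pochErase n k * pochErase m k) - X * pochOneSub n * pochOneSub m := by
  have hkey := doubleCoeff_mul_eval_neg_pochErase hk hnm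
  rw [X_add_C_eq_X_sub_C_neg]
  apply sq_X_sub_C_dvd_of_eval_eq_zero <;> rw [partialNumer, if_pos hk]
  · simp only [eval_sub, eval_mul, eval_add, eval_C, eval_X]
    linear_combination (-(k : ℚ)) * hkey
  · simp only [derivative_sub, derivative_mul, derivative_add, derivative_C, derivative_X,
      eval_sub, eval_mul, eval_add, eval_C, eval_X, eval_one, zero_mul, zero_add, add_zero, mul_one]
    rw [eval_neg_derivative_pochErase hk, eval_neg_derivative_pochErase (hk.trans hnm),
      eval_neg_derivative_pochOneSub, eval_neg_derivative_pochOneSub, harmonicCoeff]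
    linear_combination (1 + (k : ℚ) * (H (m + k) + H (n + k) - 2 * H k)) * hkey

lemma X_add_C_dvd_partialNumer_sub_of_lt {k : ℕ} (hnk : n < k) (hkm : k ≤ m) :
    X + C (k : ℚ) ∣
      partialNumer m n k * (pochErase n k * pochErase m k) - X * pochOneSub n * pochOneSub m := by
  have hkey := simpleCoeff_mul_eval_neg_pochErase hnk hkm
  rw [X_add_C_eq_X_sub_C_neg, dvd_iff_isRoot, IsRoot, partialNumer, if_neg hnk.not_ge]
  simp only [eval_sub, eval_mul, eval_C, eval_X]
  linear_combination hkey

lemma pow_poleOrder_dvd_partialNumer_sub {k : ℕ} (hkm : k ≤ m) (hnm : n ≤ m) :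
    (X + C (k : ℚ)) ^ poleOrder n k ∣
      partialNumer m n k * (pochErase n k * pochErase m k) - X * pochOneSub n * pochOneSub m := by
  unfold poleOrder
  split_ifs with hk
  · exact sq_dvd_partialNumer_sub_of_le hk hnm
  · exact (pow_one (X + C (k : ℚ))).symm ▸ X_add_C_dvd_partialNumer_sub_of_lt (not_le.1 hk) hkm

lemma pow_poleOrder_dvd_pochErase_mul {j k : ℕ} (hkm : k ≤ m) (hjk : j ≠ k) :
    (X + C (k : ℚ)) ^ poleOrder n k ∣ pochErase n j * pochErase m j := by
  unfold poleOrder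
  split_ifs with hk
  · exact (sq (X + C (k : ℚ))).symm ▸
      mul_dvd_mul (X_add_C_dvd_pochErase hk hjk) (X_add_C_dvd_pochErase hkm hjk)
  · exact (pow_one (X + C (k : ℚ))).symm ▸ (X_add_C_dvd_pochErase hkm hjk).mul_left _

lemma pow_poleOrder_dvd_clearedSum_sub {k : ℕ} (hkm : k ≤ m) (hnm : n ≤ m) :
    (X + C (k : ℚ)) ^ poleOrder n k ∣ clearedSum m n - X * pochOneSub n * pochOneSub m := by
  rw [clearedSum, ← add_sum_erase _ _ (mem_range.2 (Nat.lt_succ_of_le hkm)), add_sub_right_comm]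
  exact dvd_add (pow_poleOrder_dvd_partialNumer_sub hkm hnm) (dvd_sum fun j hj =>
    (pow_poleOrder_dvd_pochErase_mul hkm (ne_of_mem_erase hj)).mul_left _)

lemma natDegree_partialNumer_mul_pochErase_le (k : ℕ) :
    (partialNumer m n k * pochErase n k).natDegree ≤ n + 1 := by
  unfold partialNumer
  split_ifs with hk
  · refine natDegree_mul_le.trans ((add_le_add ?_ (natDegree_pochErase_le_of_le hk)).trans_eq
      (add_comm 1 n))
    compute_degree!
  · exact (natDegree_C_mul_le _ _).trans (natDegree_pochErase_le n k)

lemma natDegree_clearedSum_sub_le :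
    (clearedSum m n - X * pochOneSub n * pochOneSub m).natDegree ≤ n + m + 1 := by
  refine (natDegree_sub_le _ _).trans (max_le ?_ ?_)
  · refine natDegree_sum_le_of_forall_le _ _ fun k hk => ?_
    rw [← mul_assoc]
    exact natDegree_mul_le.trans ((add_le_add (natDegree_partialNumer_mul_pochErase_le k)
      (natDegree_pochErase_le_of_le (Nat.lt_succ_iff.1 (mem_range.1 hk)))).trans (by omega))
  · exact natDegree_mul_le.trans ((add_le_add (natDegree_mul_le.trans (add_le_add natDegree_X_le
      (natDegree_pochOneSub_le n))) (natDegree_pochOneSub_le m)).trans (by omega))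

lemma sum_poleOrder (hnm : n ≤ m) : ∑ k ∈ range (m + 1), poleOrder n k = n + m + 2 := by
  have hdouble : ∀ k ∈ range (n + 1), poleOrder n k = 2 := fun k hk =>
    if_pos (Nat.lt_succ_iff.1 (mem_range.1 hk))
  have hsimple : ∀ k ∈ Ico (n + 1) (m + 1), poleOrder n k = 1 := fun k hk =>
    if_neg (not_le.2 (mem_Ico.1 hk).1)
  rw [← sum_range_add_sum_Ico _ (Nat.succ_le_succ hnm), sum_congr rfl hdouble,
    sum_congr rfl hsimple]
  simp only [sum_const, card_range, Nat.card_Ico, smul_eq_mul]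
  omega

theorem clearedSum_eq (hnm : n ≤ m) : clearedSum m n = X * pochOneSub n * pochOneSub m := by
  refine sub_eq_zero.1 (eq_zero_of_pow_X_sub_C_dvd (s := range (m + 1))
    (a := fun k : ℕ => -(k : ℚ)) (fun i j h => by simpa using h) (poleOrder n)
    (fun k hk => ?_) ?_)
  · rw [← X_add_C_eq_X_sub_C_neg]
    exact pow_poleOrder_dvd_clearedSum_sub (Nat.lt_succ_iff.1 (mem_range.1 hk)) hnm
  · rw [sum_poleOrder hnm]
    exact Nat.lt_succ_of_le natDegree_clearedSum_sub_le

variable {x : ℚ}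

lemma doubleCoeff_mul_riseFact_mul {k : ℕ} (hk : k ≤ n) (hnm : n ≤ m) (hx : x + k ≠ 0) :
    doubleCoeff m n k * (-(k : ℚ) / (x + k) ^ 2 + harmonicCoeff m n k / (x + k)) *
        (riseFact x (n + 1) * riseFact x (m + 1)) =
      (partialNumer m n k * (pochErase n k * pochErase m k)).eval x := by
  rw [riseFact_succ_eq_mul_eval_pochErase hk, riseFact_succ_eq_mul_eval_pochErase (hk.trans hnm),
    partialNumer, if_pos hk]
  simp only [eval_mul, eval_add, eval_C, eval_X]
  field_simp

lemma simpleCoeff_mul_riseFact_mul {k : ℕ} (hnk : n < k) (hkm : k ≤ m) (hx : x + k ≠ 0) :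
    simpleCoeff m n k / (x + k) * (riseFact x (n + 1) * riseFact x (m + 1)) =
      (partialNumer m n k * (pochErase n k * pochErase m k)).eval x := by
  rw [riseFact_succ_eq_eval_pochErase_of_lt hnk, riseFact_succ_eq_mul_eval_pochErase hkm,
    partialNumer, if_neg hnk.not_ge]
  simp only [eval_mul, eval_C]
  field_simp

end PartialFractions

theorem stmt_3_general (m n : ℕ) (hmn : n ≤ m) (x : ℚ)
    (hx : ∀ j : ℕ, j ≤ m → x + (j : ℚ) ≠ 0) :
    (∑ k ∈ Finset.range (n + 1),
      ((m + k).choose k : ℚ) * (m.choose k : ℚ) * ((n + k).choose k : ℚ) * (n.choose k : ℚ) *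
        (-(k : ℚ) / (x + k) ^ 2
          + (1 + (k : ℚ) * (harmonicSum 1 (m + k) + harmonicSum 1 (m - k) + harmonicSum 1 (n + k)
              + harmonicSum 1 (n - k) - 4 * harmonicSum 1 k)) / (x + k)))
    + (∑ k ∈ Finset.Icc (n + 1) m,
      (-1 : ℚ) ^ (k - n) / (x + k) * ((m + k).choose k : ℚ) * (m.choose k : ℚ)
        * ((n + k).choose k : ℚ) / ((k - 1).choose n : ℚ))
    = x * riseFact (1 - x) n * riseFact (1 - x) m
        / (riseFact x (n + 1) * riseFact x (m + 1)) := by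
  have hD : riseFact x (n + 1) * riseFact x (m + 1) ≠ 0 :=
    mul_ne_zero (riseFact_ne_zero fun j hj => hx j (by omega))
      (riseFact_ne_zero fun j hj => hx j (by omega))
  have hnumer : x * riseFact (1 - x) n * riseFact (1 - x) m =
      (X * pochOneSub n * pochOneSub m).eval x := by
    simp only [eval_mul, eval_X, eval_pochOneSub]
  rw [eq_div_iff hD, hnumer, ← clearedSum_eq hmn, clearedSum,
    ← sum_range_add_sum_Ico _ (Nat.add_le_add_right hmn 1), Ico_add_one_right_eq_Icc, eval_add,
    eval_finsetSum, eval_finsetSum, add_mul, sum_mul, sum_mul]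
  congr 1
  · refine sum_congr rfl fun k hk => ?_
    have hkn := Nat.lt_succ_iff.1 (mem_range.1 hk)
    exact doubleCoeff_mul_riseFact_mul hkn hmn (hx k (hkn.trans hmn))
  · refine sum_congr rfl fun k hk => ?_
    obtain ⟨hnk, hkm⟩ := mem_Icc.1 hk
    rw [← simpleCoeff_mul_riseFact_mul hnk hkm (hx k hkm), simpleCoeff]
    ring

theorem stmt_3 (m n : ℕ) (hn : 0 < n) (hmn : n ≤ m) (x : ℚ)
    (hx : ∀ j : ℕ, j ≤ m → x + (j : ℚ) ≠ 0) :
    (∑ k ∈ Finset.range (n + 1),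
      ((m + k).choose k : ℚ) * (m.choose k : ℚ) * ((n + k).choose k : ℚ) * (n.choose k : ℚ) *
        (-(k : ℚ) / (x + k) ^ 2
          + (1 + (k : ℚ) * (harmonicSum 1 (m + k) + harmonicSum 1 (m - k) + harmonicSum 1 (n + k)
              + harmonicSum 1 (n - k) - 4 * harmonicSum 1 k)) / (x + k)))
    + (∑ k ∈ Finset.Icc (n + 1) m,
      (-1 : ℚ) ^ (k - n) / (x + k) * ((m + k).choose k : ℚ) * (m.choose k : ℚ)
        * ((n + k).choose k : ℚ) / ((k - 1).choose n : ℚ))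
    = x * riseFact (1 - x) n * riseFact (1 - x) m
        / (riseFact x (n + 1) * riseFact x (m + 1)) :=
  stmt_3_general m n hmn x hx
end

section
/- Let $m \geq n$ be positive integers and let $1 \leq k \leq n$. Then $\lim_{x \to -k} (x+k)^2 \cdot \frac{x\,(1-x)_n\,(1-x)_m}{(x)_{n+1}(x)_{m+1}} = -k\binom{m+k}{k}\binom{m}{k}\binom{n+k}{k}\binom{n}{k}$. Equivalently, $\frac{-k\,(k+1)_n\,(k+1)_m}{((-k)_k)^2\,(n-k)!\,(m-k)!} = -k\binom{m+k}{k}\binom{m}{k}\binom{n+k}{k}\binom{n}{k}$. -/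
open Finset Filter Topology

/-- Rising factorial `(a)_r = a(a+1)⋯(a+r-1)` over the reals. -/
def riseFactR (a : ℝ) (r : ℕ) : ℝ := ∏ j ∈ Finset.range r, (a + j)

/-!
At `x = -k` both `(x)_{n+1}` and `(x)_{m+1}` have a simple zero, coming from the factor `x + k`.
Cancelling `(x + k)²` leaves a quotient of polynomials whose denominator
`(x)_k · (x+k+1)_{n-k} · (x)_k · (x+k+1)_{m-k}` does not vanish at `-k`, so the limit is the value
of that quotient at `-k`. There `(1-x)_n = (k+1)_n = (n+k)!/k!`, `(x)_k = (-k)_k = (-1)^k k!` and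
`(x+k+1)_{n-k} = (n-k)!`, which gives the rational expression, and
`(n+k)!/(k!² (n-k)!) = C(n+k,k) C(n,k)` gives the product of binomial coefficients.
-/

open Nat

theorem factorial_add_eq_choose_mul_choose {n k : ℕ} (hkn : k ≤ n) :
    (n + k)! = (n + k).choose k * n.choose k * k ! ^ 2 * (n - k)! := by
  rw [← Nat.add_choose_mul_factorial_mul_factorial n k,
    ← Nat.choose_mul_factorial_mul_factorial hkn]
  ring

section RisingProducts

variable {R K : Type*} [CommRing R] [Field K] [CharZero K]

theorem prod_range_natCast_add_one_add (k r : ℕ) :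
    ∏ j ∈ range r, ((k : K) + 1 + j) = ((k + r)! : K) / k ! := by
  rw [eq_div_iff (Nat.cast_ne_zero.mpr k.factorial_ne_zero), ← Nat.factorial_mul_ascFactorial,
    Nat.ascFactorial_eq_prod_range]
  push_cast
  ring

theorem prod_range_neg_natCast_add (k : ℕ) :
    ∏ j ∈ range k, (-(k : R) + j) = (-1) ^ k * k ! := by
  have h : ∀ j : ℕ, -(k : R) + j = -((k : R) - j) := fun j => by ring
  simp_rw [h, prod_neg, card_range, ← descPochhammer_eval_eq_prod_range,
    descPochhammer_eval_eq_descFactorial, Nat.descFactorial_self]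

theorem prod_range_add_natCast_split (x : R) (k d : ℕ) :
    ∏ j ∈ range (k + 1 + d), (x + j) =
      (x + k) * ((∏ j ∈ range k, (x + j)) * ∏ i ∈ range d, (x + (k + 1 + i : ℕ))) := by
  rw [prod_range_add, prod_range_succ]
  ring

theorem prod_range_neg_natCast_add_succ_add (k d : ℕ) :
    ∏ i ∈ range d, (-(k : R) + (k + 1 + i : ℕ)) = d ! := by
  rw [← prod_range_add_one_eq_factorial, Nat.cast_prod]
  refine prod_congr rfl fun i _ => ?_
  push_cast
  ring

theorem neg_mul_prod_range_div_eq_choose {m n k : ℕ} (hkn : k ≤ n) (hkm : k ≤ m) :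
    -(k : K) * (∏ j ∈ range n, ((k : K) + 1 + j)) * (∏ j ∈ range m, ((k : K) + 1 + j))
        / ((∏ j ∈ range k, (-(k : K) + j)) ^ 2 * ((n - k)! : K) * ((m - k)! : K))
      = -(k : K) * ((m + k).choose k : K) * (m.choose k : K) * ((n + k).choose k : K)
        * (n.choose k : K) := by
  have hsign : ((-1 : K) ^ k) ^ 2 = 1 := by rw [← pow_mul, mul_comm, pow_mul, neg_one_sq, one_pow]
  have hk : (k ! : K) ≠ 0 := Nat.cast_ne_zero.mpr k.factorial_ne_zero
  have hn : ((n - k)! : K) ≠ 0 := Nat.cast_ne_zero.mpr (n - k).factorial_ne_zero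
  have hm : ((m - k)! : K) ≠ 0 := Nat.cast_ne_zero.mpr (m - k).factorial_ne_zero
  rw [prod_range_natCast_add_one_add, prod_range_natCast_add_one_add, prod_range_neg_natCast_add,
    mul_pow, hsign, add_comm k n, add_comm k m, factorial_add_eq_choose_mul_choose hkn,
    factorial_add_eq_choose_mul_choose hkm]
  push_cast
  field_simp

end RisingProducts

theorem tendsto_sub_sq_mul_div_sub_sq_mul {𝕜 : Type*} [Field 𝕜] [TopologicalSpace 𝕜]
    [ContinuousInv₀ 𝕜] [ContinuousMul 𝕜] {f g : 𝕜 → 𝕜} {c : 𝕜}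
    (hf : ContinuousAt f c) (hg : ContinuousAt g c) (hgc : g c ≠ 0) :
    Tendsto (fun x => (x - c) ^ 2 * (f x / ((x - c) ^ 2 * g x))) (𝓝[≠] c) (𝓝 (f c / g c)) := by
  refine ((hf.div hg hgc).tendsto.mono_left nhdsWithin_le_nhds).congr' ?_
  filter_upwards [self_mem_nhdsWithin] with x hx
  have hxc : (x - c) ^ 2 ≠ 0 := pow_ne_zero 2 (sub_ne_zero.mpr hx)
  rw [Pi.div_apply, mul_div_assoc', mul_div_mul_left _ _ hxc]

theorem stmt_5_general (m n k : ℕ) (hmn : n ≤ m) (hkn : k ≤ n) :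
    Filter.Tendsto
      (fun x : ℝ => (x + k) ^ 2 *
        (x * riseFactR (1 - x) n * riseFactR (1 - x) m
          / (riseFactR x (n + 1) * riseFactR x (m + 1))))
      (𝓝[≠] (-(k : ℝ)))
      (𝓝 (-(k : ℝ) * ((m + k).choose k : ℝ) * (m.choose k : ℝ) * ((n + k).choose k : ℝ)
        * (n.choose k : ℝ)))
    ∧
    -(k : ℚ) * riseFact ((k : ℚ) + 1) n * riseFact ((k : ℚ) + 1) m
        / ((riseFact (-(k : ℚ)) k) ^ 2 * ((n - k).factorial : ℚ) * ((m - k).factorial : ℚ))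
      = -(k : ℚ) * ((m + k).choose k : ℚ) * (m.choose k : ℚ) * ((n + k).choose k : ℚ)
        * (n.choose k : ℚ) := by
  have hkm : k ≤ m := hkn.trans hmn
  refine ⟨?_, neg_mul_prod_range_div_eq_choose hkn hkm⟩
  set P : ℕ → ℝ → ℝ := fun d x => (∏ j ∈ range k, (x + j)) * ∏ i ∈ range d, (x + (k + 1 + i : ℕ))
  have hsplit (x : ℝ) :
      riseFactR x (n + 1) * riseFactR x (m + 1) = (x - -k) ^ 2 * (P (n - k) x * P (m - k) x) := by
    rw [riseFactR, riseFactR, show n + 1 = k + 1 + (n - k) by omega,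
      show m + 1 = k + 1 + (m - k) by omega, prod_range_add_natCast_split,
      prod_range_add_natCast_split]
    ring
  have hP (d : ℕ) : P d (-k) = (∏ j ∈ range k, (-(k : ℝ) + j)) * d ! := by
    simp only [P, prod_range_neg_natCast_add_succ_add]
  have hPne (d : ℕ) : P d (-k) ≠ 0 := by
    rw [hP, prod_range_neg_natCast_add]
    positivity
  have hlim := tendsto_sub_sq_mul_div_sub_sq_mul
    (f := fun x : ℝ => x * riseFactR (1 - x) n * riseFactR (1 - x) m)
    (g := fun x => P (n - k) x * P (m - k) x) (c := -k)
    (by unfold riseFactR; fun_prop) (by fun_prop) (mul_ne_zero (hPne _) (hPne _))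
  have hvalue : (-k * riseFactR (1 - -k) n * riseFactR (1 - -k) m) / (P (n - k) (-k) * P (m - k) (-k))
      = -(k : ℝ) * ((m + k).choose k : ℝ) * (m.choose k : ℝ) * ((n + k).choose k : ℝ)
        * (n.choose k : ℝ) := by
    rw [hP, hP, ← neg_mul_prod_range_div_eq_choose hkn hkm, sub_neg_eq_add, add_comm 1 (k : ℝ)]
    unfold riseFactR
    ring
  rw [← hvalue]
  simpa only [hsplit, sub_neg_eq_add] using hlim

theorem stmt_5 (m n k : ℕ) (hn : 0 < n) (hmn : n ≤ m) (hk1 : 1 ≤ k) (hkn : k ≤ n) :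
    Filter.Tendsto
      (fun x : ℝ => (x + k) ^ 2 *
        (x * riseFactR (1 - x) n * riseFactR (1 - x) m
          / (riseFactR x (n + 1) * riseFactR x (m + 1))))
      (𝓝[≠] (-(k : ℝ)))
      (𝓝 (-(k : ℝ) * ((m + k).choose k : ℝ) * (m.choose k : ℝ) * ((n + k).choose k : ℝ)
        * (n.choose k : ℝ)))
    ∧
    -(k : ℚ) * riseFact ((k : ℚ) + 1) n * riseFact ((k : ℚ) + 1) m
        / ((riseFact (-(k : ℚ)) k) ^ 2 * ((n - k).factorial : ℚ) * ((m - k).factorial : ℚ))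
      = -(k : ℚ) * ((m + k).choose k : ℚ) * (m.choose k : ℚ) * ((n + k).choose k : ℚ)
        * (n.choose k : ℚ) :=
  stmt_5_general m n k hmn hkn
end

section
/- Let $m \geq n$ be positive integers, let $1 \leq k \leq n$, and define $g(x) = \frac{x\,(1-x)_n\,(1-x)_m}{((x)_k)^2\,(x+k+1)_{n-k}\,(x+k+1)_{m-k}}$ for real $x$ near $-k$. Then $g'(-k) = \binom{m+k}{k}\binom{m}{k}\binom{n+k}{k}\binom{n}{k}\left[1 + k\left(H_{m+k}^{(1)} + H_{m-k}^{(1)} + H_{n+k}^{(1)} + H_{n-k}^{(1)} - 4H_k^{(1)}\right)\right]$. -/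
open Finset

/-!
Every factor of `g` is a rising factorial in `x` or `1 - x`, and `(a)_r` has logarithmic
derivative `∑_{j<r} 1/(a+j)`. At `x = -k` these sums are differences of harmonic numbers and the
values are quotients of factorials; `(-k)_k = (-1)^k k!` enters only squared, so no sign survives.
The quotient rule then yields the formula once the binomial coefficients are written as factorials.
-/

open Nat

lemma harmonicSum_one_s7 (n : ℕ) : harmonicSum 1 n = harmonic n := by
  simp [harmonicSum, harmonic]

lemma hasDerivAt_riseFactR {a : ℝ} {r : ℕ} (ha : ∀ j < r, a + j ≠ 0) :
    HasDerivAt (riseFactR · r) (riseFactR a r * ∑ j ∈ range r, (a + j)⁻¹) a := by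
  have h := HasDerivAt.fun_finsetProd (u := range r) (x := a)
    (fun j _ => (hasDerivAt_id a).add_const (j : ℝ))
  simp only [id, smul_eq_mul, mul_one] at h
  refine h.congr_deriv ?_
  rw [mul_sum]
  refine sum_congr rfl fun j hj => ?_
  rw [riseFactR, ← mul_prod_erase _ _ hj]
  field_simp [ha j (mem_range.mp hj)]

lemma riseFactR_neg_self (k : ℕ) : riseFactR (-k) k = (-1) ^ k * k ! := by
  have h := prod_neg (s := range k) (fun j => (j : ℝ) + 1)
  rw [card_range] at h
  rw [← prod_range_add_one_eq_factorial, Nat.cast_prod]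
  push_cast
  rw [← h, riseFactR, ← prod_range_reflect]
  refine prod_congr rfl fun j hj => ?_
  rw [Nat.cast_sub (by grind), Nat.cast_sub (by grind)]
  push_cast
  ring

lemma riseFactR_neg_self_sq (k : ℕ) : riseFactR (-k) k ^ 2 = (k ! : ℝ) ^ 2 := by
  rw [riseFactR_neg_self, mul_pow, ← pow_mul', (even_two_mul k).neg_one_pow, one_mul]

lemma riseFactR_natCast_add_one (k r : ℕ) : riseFactR (k + 1) r = (r + k)! / k ! := by
  rw [eq_div_iff (by positivity), add_comm r, ← factorial_mul_ascFactorial,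
    ascFactorial_eq_prod_range, riseFactR]
  push_cast
  ring_nf

lemma riseFactR_one (r : ℕ) : riseFactR 1 r = r ! := by
  simpa using riseFactR_natCast_add_one 0 r

lemma sum_range_inv_neg_natCast_add (k : ℕ) :
    ∑ j ∈ range k, (-(k : ℝ) + j)⁻¹ = -harmonic k := by
  rw [harmonic, ← sum_range_reflect, Rat.cast_sum, ← sum_neg_distrib]
  refine sum_congr rfl fun j hj => ?_
  rw [Nat.cast_sub (by grind), Nat.cast_sub (by grind)]
  push_cast
  rw [← inv_neg]
  ring_nf

lemma sum_range_inv_natCast_add_one_add (k r : ℕ) :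
    ∑ j ∈ range r, ((k : ℝ) + 1 + j)⁻¹ = harmonic (r + k) - harmonic k := by
  rw [add_comm r, harmonic, harmonic, sum_range_add, Rat.cast_add, add_sub_cancel_left,
    Rat.cast_sum]
  refine sum_congr rfl fun j _ => ?_
  push_cast
  ring_nf

lemma hasDerivAt_riseFactR_sq_at_neg (k : ℕ) :
    HasDerivAt (fun x => riseFactR x k ^ 2) (-(2 * (k ! : ℝ) ^ 2 * harmonic k)) (-k) := by
  have hk : ∀ j < k, -(k : ℝ) + j ≠ 0 := fun j hj => by
    have : (j : ℝ) < k := by exact_mod_cast hj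
    linarith
  refine ((hasDerivAt_riseFactR hk).pow 2).congr_deriv ?_
  rw [sum_range_inv_neg_natCast_add, ← riseFactR_neg_self_sq]
  push_cast
  ring

lemma hasDerivAt_riseFactR_one_sub_at_neg (k r : ℕ) :
    HasDerivAt (fun x => riseFactR (1 - x) r)
      (-((r + k)! / k ! * (harmonic (r + k) - harmonic k))) (-k) := by
  have hk : ∀ j < r, 1 - -(k : ℝ) + j ≠ 0 := fun j _ => by rw [sub_neg_eq_add]; positivity
  refine ((hasDerivAt_riseFactR hk).comp (-(k : ℝ))
    ((hasDerivAt_id _).const_sub 1)).congr_deriv ?_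
  rw [sub_neg_eq_add, add_comm 1, riseFactR_natCast_add_one, sum_range_inv_natCast_add_one_add]
  ring

lemma hasDerivAt_riseFactR_add_add_one_at_neg (k r : ℕ) :
    HasDerivAt (fun x => riseFactR (x + k + 1) r) (r ! * harmonic r) (-k) := by
  have hk : ∀ j < r, 1 + (j : ℝ) ≠ 0 := fun j _ => by positivity
  refine ((hasDerivAt_riseFactR hk).comp_of_eq (-(k : ℝ))
    (((hasDerivAt_id _).add_const (k : ℝ)).add_const 1) (by simp)).congr_deriv ?_
  have hH := sum_range_inv_natCast_add_one_add 0 r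
  rw [CharP.cast_eq_zero, zero_add, add_zero, harmonic_zero, Rat.cast_zero, sub_zero] at hH
  rw [mul_one, riseFactR_one, hH]

theorem stmt_7_general (m n k : ℕ) (hmn : n ≤ m) (hkn : k ≤ n) :
    deriv
      (fun x : ℝ => x * riseFactR (1 - x) n * riseFactR (1 - x) m
        / ((riseFactR x k) ^ 2 * riseFactR (x + k + 1) (n - k) * riseFactR (x + k + 1) (m - k)))
      (-(k : ℝ))
    = ((m + k).choose k : ℝ) * (m.choose k : ℝ) * ((n + k).choose k : ℝ) * (n.choose k : ℝ)
      * (1 + (k : ℝ) * ((harmonicSum 1 (m + k) : ℝ) + (harmonicSum 1 (m - k) : ℝ)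
        + (harmonicSum 1 (n + k) : ℝ) + (harmonicSum 1 (n - k) : ℝ) - 4 * (harmonicSum 1 k : ℝ))) := by
  have hD : riseFactR (-k) k ^ 2 * riseFactR (-k + k + 1) (n - k)
      * riseFactR (-k + k + 1) (m - k) ≠ 0 := by
    rw [riseFactR_neg_self_sq, neg_add_cancel, zero_add, riseFactR_one, riseFactR_one]
    positivity
  have hg := (((hasDerivAt_id' (-(k : ℝ))).mul (hasDerivAt_riseFactR_one_sub_at_neg k n)).mul
    (hasDerivAt_riseFactR_one_sub_at_neg k m)).div
    (((hasDerivAt_riseFactR_sq_at_neg k).mul (hasDerivAt_riseFactR_add_add_one_at_neg k (n - k))).mul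
      (hasDerivAt_riseFactR_add_add_one_at_neg k (m - k))) hD
  refine hg.deriv.trans ?_
  simp only [Pi.mul_apply, sub_neg_eq_add, add_comm 1 (k : ℝ), riseFactR_natCast_add_one,
    riseFactR_neg_self_sq, neg_add_cancel, zero_add, riseFactR_one, harmonicSum_one_s7,
    ← Nat.choose_symm_add, Nat.cast_add_choose, Nat.cast_choose ℝ (hkn.trans hmn),
    Nat.cast_choose ℝ hkn]
  field_simp
  ring

theorem stmt_7 (m n k : ℕ) (hn : 0 < n) (hmn : n ≤ m) (hk1 : 1 ≤ k) (hkn : k ≤ n) :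
    deriv
      (fun x : ℝ => x * riseFactR (1 - x) n * riseFactR (1 - x) m
        / ((riseFactR x k) ^ 2 * riseFactR (x + k + 1) (n - k) * riseFactR (x + k + 1) (m - k)))
      (-(k : ℝ))
    = ((m + k).choose k : ℝ) * (m.choose k : ℝ) * ((n + k).choose k : ℝ) * (n.choose k : ℝ)
      * (1 + (k : ℝ) * ((harmonicSum 1 (m + k) : ℝ) + (harmonicSum 1 (m - k) : ℝ)
        + (harmonicSum 1 (n + k) : ℝ) + (harmonicSum 1 (n - k) : ℝ) - 4 * (harmonicSum 1 k : ℝ))) :=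
  stmt_7_general m n k hmn hkn
end
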